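/- Let A ∈ F[x_1,…,x_n] be a polynomial of individual degree at most d such that for every k with 1 ≤ k ≤ n−1, writing y_k = (x_1,…,x_k), the F-linear span of {A_{(y_k,a)} : a ∈ {0,1,…,d}^k} has dimension exactly w (and the dimension for k = n is 1). Then there exist matrices D_1 ∈ F[x_1]^{1×w}, D_i ∈ F[x_i]^{w×w} for 2 ≤ i ≤ n−1, and D_n ∈ F[x_n]^{w×1} with A = D_1·D_2⋯D_n such that for every k ∈ {1,…,n−1} and every ℓ ∈ {1,…,w}, there is an exponent a ∈ {0,1,…,d}^k with coeff_{P_k}(y_k^a) = e_ℓ, where P_k = D_1·D_2⋯D_k ∈ F[y_k]^{1×w}, coeff_{P_k}(y_k^a) ∈ F^{1×w} is the (entrywise) coefficient of the monomial y_k^a in P_k, and e_ℓ is the ℓ-th standard unit row vector. In particular, the F-span of the coefficients of P_k is all of F^{1×w}. -/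

import Mathlib

open MvPolynomial Matrix

noncomputable section

variable {F : Type*} [Field F]

/-- `p` only involves the variable `i` (it is a univariate polynomial in `x_i`). -/
def UnivariateIn {n : ℕ} (i : Fin n) (p : MvPolynomial (Fin n) F) : Prop :=
  ∀ m ∈ p.support, ∀ j : Fin n, j ≠ i → m j = 0

/-- The ordered product `D 0 * D 1 * ⋯ * D (n-1)` of the layer matrices of a branching program. -/
def layerProd {n w : ℕ} (D : Fin n → Matrix (Fin w) (Fin w) (MvPolynomial (Fin n) F)) :
    Matrix (Fin w) (Fin w) (MvPolynomial (Fin n) F) :=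
  ((List.finRange n).map D).prod

/-- The ordered product of the first `k` layer matrices. -/
def prefixProd {n w : ℕ} (k : ℕ)
    (D : Fin n → Matrix (Fin w) (Fin w) (MvPolynomial (Fin n) F)) :
    Matrix (Fin w) (Fin w) (MvPolynomial (Fin n) F) :=
  (((List.finRange n).take k).map D).prod

/-- `A` is computed by a read-once oblivious ABP of width `w` in variable order
`(x_{π 0}, …, x_{π (n-1)})`: `A = D₁ ⋯ Dₙ` where the entries of the `i`-th layer are
univariate polynomials in `x_{π i}`; the `1 × w` first layer and the `w × 1` last layer are
encoded by the constant selection vectors `u` and `v`. -/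
def IsROABP {n : ℕ} (w : ℕ) (π : Equiv.Perm (Fin n)) (A : MvPolynomial (Fin n) F) : Prop :=
  ∃ (u : Matrix (Fin 1) (Fin w) F) (D : Fin n → Matrix (Fin w) (Fin w) (MvPolynomial (Fin n) F))
    (v : Matrix (Fin w) (Fin 1) F),
    (∀ i r c, UnivariateIn (π i) (D i r c)) ∧
      A = (u.map (MvPolynomial.C (σ := Fin n)) * layerProd D * v.map (MvPolynomial.C (σ := Fin n)) :
        Matrix (Fin 1) (Fin 1) (MvPolynomial (Fin n) F)) 0 0

/-- The vector polynomial `P ∈ F[x]^{1×w}` is computed by an ROABP of width `w`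
in variable order `π`. -/
def IsVecROABP {n : ℕ} (w : ℕ) (π : Equiv.Perm (Fin n))
    (P : Fin w → MvPolynomial (Fin n) F) : Prop :=
  ∃ (u : Matrix (Fin 1) (Fin w) F) (D : Fin n → Matrix (Fin w) (Fin w) (MvPolynomial (Fin n) F)),
    (∀ i r c, UnivariateIn (π i) (D i r c)) ∧
      ∀ j, P j = (u.map (MvPolynomial.C) * layerProd D :
        Matrix (Fin 1) (Fin w) (MvPolynomial (Fin n) F)) 0 j

/-- The matrix polynomial `A ∈ F^{w×w}[x]` is computed by an ROABP of width `w`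
in variable order `π`. -/
def IsMatROABP {n : ℕ} (w : ℕ) (π : Equiv.Perm (Fin n))
    (A : Matrix (Fin w) (Fin w) (MvPolynomial (Fin n) F)) : Prop :=
  ∃ D : Fin n → Matrix (Fin w) (Fin w) (MvPolynomial (Fin n) F),
    (∀ i r c, UnivariateIn (π i) (D i r c)) ∧ A = layerProd D

/-- `A` has individual degree at most `d` in every variable. -/
def IndivDegLE {n : ℕ} (d : ℕ) (A : MvPolynomial (Fin n) F) : Prop :=
  ∀ m ∈ A.support, ∀ i, m i ≤ d

/-- The set of the first `k` variables `y_k = (x_0, …, x_{k-1})`. -/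
def prefixFinset (n k : ℕ) : Finset (Fin n) := Finset.univ.filter fun i => (i : ℕ) < k

/-- The coefficient polynomial `A_{(y,a)} ∈ F[z]`: the coefficient of the monomial `y^a`
when `A` is written as a polynomial in the variables `y` (those in `S`) with coefficients
in the remaining variables `z`. -/
def coeffWrt {n : ℕ} (S : Finset (Fin n)) (a : Fin n → ℕ) (A : MvPolynomial (Fin n) F) :
    MvPolynomial (Fin n) F :=
  ∑ m ∈ A.support.filter (fun m => ∀ i ∈ S, m i = a i),
    MvPolynomial.monomial (m.filter fun i => i ∉ S) (A.coeff m)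

/-- The exponent vector supported on `S` with values given by `a`. -/
def expOn {n : ℕ} (S : Finset (Fin n)) (a : Fin n → ℕ) : Fin n →₀ ℕ :=
  Finsupp.equivFunOnFinite.symm fun i => if i ∈ S then a i else 0

/-- A family of coefficients (of a polynomial over the `K`-vector space `V`) is
`ℓ`-concentrated over `K` if every coefficient lies in the `K`-span of the coefficients
of monomials of support `< ℓ`. -/
def Concentrated (K : Type*) [Field K] {V : Type*} [AddCommGroup V] [Module K V] {n : ℕ}
    (ℓ : ℕ) (cf : (Fin n →₀ ℕ) → V) : Prop :=
  ∀ a : Fin n →₀ ℕ, cf a ∈ Submodule.span K (cf '' {b | b.support.card < ℓ})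

/-- The polynomial `A(x + f(t))`, with coefficients viewed in the rational function
field `F(t)`. -/
def shiftBy {n : ℕ} (f : Fin n → Polynomial F) (A : MvPolynomial (Fin n) F) :
    MvPolynomial (Fin n) (RatFunc F) :=
  MvPolynomial.aeval
    (fun i => MvPolynomial.X i +
      MvPolynomial.C (algebraMap (Polynomial F) (RatFunc F) (f i))) A

/-- The polynomial `A(x + g(y,t))` for a bivariate shift `g ∈ F[y,t]^n`
(encoded with `y` the outer and `t` the inner variable), with coefficients viewed in the
rational function field `F(y,t)`. -/
def shiftBy₂ {n : ℕ} (g : Fin n → Polynomial (Polynomial F)) (A : MvPolynomial (Fin n) F) :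
    MvPolynomial (Fin n) (RatFunc (RatFunc F)) :=
  MvPolynomial.aeval
    (fun i => MvPolynomial.X i +
      MvPolynomial.C (algebraMap (Polynomial (RatFunc F)) (RatFunc (RatFunc F))
        ((g i).map (algebraMap (Polynomial F) (RatFunc F))))) A

end

/-!
For `1 ≤ k ≤ n - 1` choose exponents `b k ℓ` (`ℓ < w`) such that the coefficient polynomials
`A_{(y_k, b k ℓ)}` form a basis of the `k`-th coefficient space, and put `b 0 = 0`. Since `A` has
individual degree `≤ d`, `A_{(y_k, b)} = ∑_{j ≤ d} x_k^j A_{(y_{k+1}, b + j e_k)}`; expanding each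
`A_{(y_{k+1}, ·)}` in the basis of level `k + 1` gives a `w × w` matrix `D_k` over `F[x_k]` that
maps the basis vector of level `k + 1` to the one of level `k`, and the last layer is the basis
vector of level `n - 1` itself. Telescoping, `A = ∑_ℓ (P_k)_ℓ · A_{(y_k, b k ℓ)}` with `P_k` over
`F[y_k]` and the `A_{(y_k, ·)}` free of `y_k`, so taking the coefficient of `y_k^{b k ℓ}` expresses
`A_{(y_k, b k ℓ)}` in the basis with the coefficients of `y_k^{b k ℓ}` in `P_k`; by linear
independence these form the unit vector `e_ℓ`.
-/

theorem MvPolynomial.mem_supported_iff_support {σ R : Type*} [CommSemiring R] {s : Set σ}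
    {p : MvPolynomial σ R} : p ∈ supported R s ↔ ∀ μ ∈ p.support, ∀ i ∉ s, μ i = 0 := by
  simp only [mem_supported, Set.subset_def, Finset.mem_coe, mem_vars_iff_mem_support,
    Finsupp.mem_support_iff]
  grind

theorem MvPolynomial.monomial_one_mul_smul {σ R : Type*} [CommSemiring R] (s : σ →₀ ℕ) (a : R)
    (p : MvPolynomial σ R) : monomial s 1 * (a • p) = monomial s a * p := by
  rw [mul_smul_comm, smul_eq_C_mul, ← mul_assoc, C_mul_monomial, mul_one]

theorem Submodule.span_eq_top_of_forall_single_mem {ι R : Type*} [Fintype ι] [DecidableEq ι]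
    [Semiring R] {s : Set (ι → R)} (h : ∀ i, (fun j => if j = i then (1 : R) else 0) ∈ s) :
    span R s = ⊤ := by
  refine eq_top_iff.2 ((Pi.basisFun R ι).span_eq.symm.le.trans (span_mono ?_))
  rintro _ ⟨i, rfl⟩
  convert h i using 1
  funext j
  simp [Pi.single_apply]

section

variable {F : Type*} [Field F] {n : ℕ}

@[simp]
theorem expOn_apply (S : Finset (Fin n)) (a : Fin n → ℕ) (i : Fin n) :
    expOn S a i = if i ∈ S then a i else 0 := rfl

theorem expOn_eq_self {S : Finset (Fin n)} {m : Fin n →₀ ℕ} (hm : ∀ i ∉ S, m i = 0) :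
    expOn S m = m := by
  ext i
  by_cases hi : i ∈ S <;> simp [hi, hm]

theorem expOn_singleton_single (i : Fin n) (j : ℕ) :
    expOn {i} (Finsupp.single i j) = Finsupp.single i j :=
  expOn_eq_self fun k hk => Finsupp.single_eq_of_ne (by simpa using hk)

theorem coeff_coeffWrt (S : Finset (Fin n)) (a : Fin n → ℕ) (A : MvPolynomial (Fin n) F)
    (μ : Fin n →₀ ℕ) :
    (coeffWrt S a A).coeff μ = if ∀ i ∈ S, μ i = 0 then A.coeff (μ + expOn S a) else 0 := by
  classical
  have key : ∀ m ∈ A.support.filter (fun m => ∀ i ∈ S, m i = a i),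
      (m.filter fun i => i ∉ S) = μ ↔ (∀ i ∈ S, μ i = 0) ∧ m = μ + expOn S a := by
    intro m hm
    have hmS := (Finset.mem_filter.1 hm).2
    constructor
    · rintro rfl
      refine ⟨fun i hi => by simp [hi], ?_⟩
      ext i
      by_cases hi : i ∈ S <;> simp [hi, hmS]
    · rintro ⟨hμ, rfl⟩
      ext i
      by_cases hi : i ∈ S <;> simp [hi, hμ]
  simp only [coeffWrt, coeff_sum, coeff_monomial]
  rw [Finset.sum_congr rfl fun m hm => if_congr (key m hm) rfl rfl]
  split_ifs with hμ
  · simp_rw [and_iff_right hμ, Finset.sum_ite_eq', Finset.mem_filter, mem_support_iff]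
    split_ifs with h
    · rfl
    · by_contra hne
      exact h ⟨Ne.symm hne, fun i hi => by simp [hi, hμ i hi]⟩
  · exact Finset.sum_eq_zero fun m _ => if_neg (fun h => hμ h.1)

theorem coeffWrt_expOn (S : Finset (Fin n)) (a : Fin n → ℕ) (A : MvPolynomial (Fin n) F) :
    coeffWrt S (expOn S a) A = coeffWrt S a A := by
  ext μ
  rw [coeff_coeffWrt, coeff_coeffWrt, expOn_eq_self fun i hi => by simp [hi]]

theorem coeffWrt_empty (a : Fin n → ℕ) (A : MvPolynomial (Fin n) F) : coeffWrt ∅ a A = A := by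
  ext μ
  have : expOn (∅ : Finset (Fin n)) a = 0 := by ext; simp
  rw [coeff_coeffWrt, if_pos (by simp), this, add_zero]

theorem coeffWrt_mem_supported (S : Finset (Fin n)) (a : Fin n → ℕ) (A : MvPolynomial (Fin n) F) :
    coeffWrt S a A ∈ supported F (↑S : Set (Fin n))ᶜ := by
  rw [mem_supported_iff_support]
  intro μ hμ i hi
  rw [mem_support_iff, coeff_coeffWrt] at hμ
  by_contra h
  exact hμ (if_neg fun hS => h (hS i (by simpa using hi)))

theorem coeffWrt_sum {ι : Type*} (s : Finset ι) (g : ι → MvPolynomial (Fin n) F)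
    (S : Finset (Fin n)) (a : Fin n → ℕ) :
    coeffWrt S a (∑ x ∈ s, g x) = ∑ x ∈ s, coeffWrt S a (g x) := by
  ext μ
  simp only [coeff_coeffWrt, coeff_sum]
  split_ifs <;> simp

theorem coeffWrt_mul {S : Finset (Fin n)} {q f : MvPolynomial (Fin n) F}
    (hq : q ∈ supported F (↑S : Set (Fin n))) (hf : f ∈ supported F (↑S : Set (Fin n))ᶜ)
    {m : Fin n →₀ ℕ} (hm : ∀ i ∉ S, m i = 0) :
    coeffWrt S m (q * f) = q.coeff m • f := by
  rw [mem_supported_iff_support] at hq hf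
  ext μ
  rw [coeff_coeffWrt, expOn_eq_self hm, coeff_smul, smul_eq_mul]
  split_ifs with hμ
  · rw [coeff_mul, Finset.sum_eq_single (m, μ)]
    · rintro ⟨x, y⟩ hxy hne
      rw [Finset.HasAntidiagonal.mem_antidiagonal] at hxy
      by_contra h
      obtain ⟨hx, hy⟩ := mul_ne_zero_iff.1 h
      have hxS := hq x (mem_support_iff.2 hx)
      have hyS := hf y (mem_support_iff.2 hy)
      have hxy_apply : ∀ i, x i = m i ∧ y i = μ i := by
        intro i
        have := DFunLike.congr_fun hxy i
        simp only [Finsupp.add_apply] at this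
        by_cases hi : i ∈ S
        · have := hyS i (by simpa using hi)
          have := hμ i hi
          omega
        · have := hxS i (by simpa using hi)
          have := hm i hi
          omega
      exact hne (Prod.ext (Finsupp.ext fun i => (hxy_apply i).1)
        (Finsupp.ext fun i => (hxy_apply i).2))
    · simp [add_comm]
  · obtain ⟨i, hi, hμi⟩ := not_forall₂.1 hμ
    rw [notMem_support_iff.1 fun h => hμi (hf μ h i (by simpa using hi)), mul_zero]

theorem coeffWrt_single_coeffWrt {S : Finset (Fin n)} {i : Fin n} (hi : i ∉ S)
    {m : Fin n →₀ ℕ} (hm : ∀ k ∉ S, m k = 0) (j : ℕ) (A : MvPolynomial (Fin n) F) :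
    coeffWrt {i} (Finsupp.single i j) (coeffWrt S m A) =
      coeffWrt (insert i S) ⇑(m + Finsupp.single i j) A := by
  have hsum : expOn (insert i S) ⇑(m + Finsupp.single i j) = m + Finsupp.single i j :=
    expOn_eq_self fun k hk => by
      simp only [Finset.mem_insert, not_or] at hk
      simp [hm k hk.2, Finsupp.single_eq_of_ne hk.1]
  ext μ
  rw [coeff_coeffWrt, coeff_coeffWrt, coeff_coeffWrt, expOn_singleton_single, expOn_eq_self hm,
    hsum]
  simp only [Finset.forall_mem_insert, Finset.mem_singleton, forall_eq]
  by_cases hμi : μ i = 0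
  · have hS : (∀ k ∈ S, (μ + Finsupp.single i j) k = 0) ↔ ∀ k ∈ S, μ k = 0 :=
      forall₂_congr fun k hk => by
        rw [Finsupp.add_apply, Finsupp.single_eq_of_ne (ne_of_mem_of_not_mem hk hi), add_zero]
    simp only [hμi, true_and, if_true, hS]
    rw [add_assoc, add_comm (Finsupp.single i j) m]
  · simp [hμi]

theorem sum_monomial_mul_coeffWrt_single {p : MvPolynomial (Fin n) F} {i : Fin n} {d : ℕ}
    (hp : ∀ μ ∈ p.support, μ i ≤ d) :
    ∑ j ∈ Finset.range (d + 1),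
      monomial (Finsupp.single i j) 1 * coeffWrt {i} (Finsupp.single i j) p = p := by
  ext μ
  simp only [coeff_sum, coeff_monomial_mul', one_mul, coeff_coeffWrt, expOn_singleton_single,
    Finset.mem_singleton, forall_eq, Finsupp.single_le_iff, Finsupp.tsub_apply,
    Finsupp.single_eq_same]
  by_cases hμ : μ i ≤ d
  · rw [Finset.sum_eq_single (μ i)]
    · have : Finsupp.single i (μ i) ≤ μ := Finsupp.single_le_iff.2 le_rfl
      simp [tsub_add_cancel_of_le this]
    · intro j _ hj
      split_ifs <;> first | rfl | omega
    · intro h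
      exact absurd (Finset.mem_range.2 (Nat.lt_succ_of_le hμ)) h
  · rw [notMem_support_iff.1 fun h => hμ (hp μ h)]
    refine Finset.sum_eq_zero fun j hj => ?_
    have := Finset.mem_range.1 hj
    split_ifs <;> first | rfl | omega

noncomputable def coeffSpace (d : ℕ) (S : Finset (Fin n)) (A : MvPolynomial (Fin n) F) :
    Submodule F (MvPolynomial (Fin n) F) :=
  Submodule.span F {P | ∃ a : Fin n → ℕ, (∀ i, a i ≤ d) ∧ P = coeffWrt S a A}

structure IsCoeffBasis {w : ℕ} (d : ℕ) (S : Finset (Fin n)) (A : MvPolynomial (Fin n) F)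
    (b : Fin w → Fin n →₀ ℕ) (c : (Fin n →₀ ℕ) → Fin w → F) : Prop where
  exp_le : ∀ ℓ i, b ℓ i ≤ d
  exp_eq_zero : ∀ ℓ, ∀ i ∉ S, b ℓ i = 0
  linearIndependent : LinearIndependent F fun ℓ => coeffWrt S (b ℓ) A
  sum_coord_smul : ∀ m : Fin n →₀ ℕ, (∀ i, m i ≤ d) →
    ∑ ℓ, c m ℓ • coeffWrt S (b ℓ) A = coeffWrt S m A

theorem exists_isCoeffBasis {d w : ℕ} {S : Finset (Fin n)} {A : MvPolynomial (Fin n) F}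
    (h : Module.rank F (coeffSpace d S A) = w) :
    ∃ (b : Fin w → Fin n →₀ ℕ) (c : (Fin n →₀ ℕ) → Fin w → F), IsCoeffBasis d S A b c := by
  obtain ⟨t, hts, hspan, hli⟩ := exists_linearIndependent F
    {P | ∃ a : Fin n → ℕ, (∀ i, a i ≤ d) ∧ P = coeffWrt S a A}
  obtain ⟨e⟩ := Cardinal.mk_eq_nat_iff.1 <| (rank_span_set hli).symm.trans (by rw [hspan]; exact h)
  choose a ha hfa using fun ℓ => hts (e.symm ℓ).2
  have hb : ∀ ℓ, coeffWrt S (expOn S (a ℓ)) A = e.symm ℓ := fun ℓ => by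
    rw [coeffWrt_expOn, hfa]
  have hrange : Set.range (fun ℓ => coeffWrt S (expOn S (a ℓ)) A) = t := by
    simp_rw [hb]
    exact (Set.range_comp _ _).trans (by simp [e.symm.surjective.range_eq])
  have hcoord (m : Fin n →₀ ℕ) : ∃ c : Fin w → F, (∀ i, m i ≤ d) →
      ∑ ℓ, c ℓ • coeffWrt S (expOn S (a ℓ)) A = coeffWrt S m A := by
    by_cases hm : ∀ i, m i ≤ d
    · have hmem : coeffWrt S m A ∈ Submodule.span F t :=
        hspan ▸ Submodule.subset_span ⟨m, hm, rfl⟩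
      rw [← hrange, Submodule.mem_span_range_iff_exists_fun] at hmem
      exact hmem.imp fun c hc _ => hc
    · exact ⟨0, fun h => absurd h hm⟩
  choose c hc using hcoord
  refine ⟨fun ℓ => expOn S (a ℓ), c, fun ℓ i => ?_, fun ℓ i hi => by simp [hi], ?_, hc⟩
  · by_cases hi : i ∈ S <;> simp [hi, ha ℓ i]
  · simp_rw [hb]
    exact hli.comp _ e.symm.injective

theorem univariateIn_iff_mem_supported {i : Fin n} {p : MvPolynomial (Fin n) F} :
    UnivariateIn i p ↔ p ∈ supported F {i} := by
  simp [UnivariateIn, mem_supported_iff_support]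

theorem IndivDegLE.coeffWrt {d : ℕ} {A : MvPolynomial (Fin n) F} (hA : IndivDegLE d A)
    (S : Finset (Fin n)) (a : Fin n → ℕ) : IndivDegLE d (coeffWrt S a A) := by
  intro μ hμ i
  rw [mem_support_iff, coeff_coeffWrt] at hμ
  split_ifs at hμ
  · exact le_trans (by simp) (hA _ (mem_support_iff.2 hμ) i)
  · exact absurd rfl hμ

theorem mem_prefixFinset {k : ℕ} {i : Fin n} : i ∈ prefixFinset n k ↔ (i : ℕ) < k := by
  simp [prefixFinset]

theorem prefixFinset_succ (i : Fin n) :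
    prefixFinset n (i + 1) = insert i (prefixFinset n i) := by
  ext j
  simp only [mem_prefixFinset, Finset.mem_insert, Fin.ext_iff]
  omega

theorem prefixProd_zero {w : ℕ} (D : Fin n → Matrix (Fin w) (Fin w) (MvPolynomial (Fin n) F)) :
    prefixProd 0 D = 1 := by
  simp [prefixProd]

theorem prefixProd_succ {w k : ℕ} (hk : k < n)
    (D : Fin n → Matrix (Fin w) (Fin w) (MvPolynomial (Fin n) F)) :
    prefixProd (k + 1) D = prefixProd k D * D ⟨k, hk⟩ := by
  have hk' : k < (List.finRange n).length := by simpa using hk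
  simp [prefixProd, List.take_add_one, List.getElem?_eq_getElem hk']

theorem layerProd_eq_prefixProd {w : ℕ}
    (D : Fin n → Matrix (Fin w) (Fin w) (MvPolynomial (Fin n) F)) :
    layerProd D = prefixProd n D := by
  rw [layerProd, prefixProd, List.take_of_length_le (by simp)]

theorem prefixProd_apply_mem_supported {w : ℕ}
    {D : Fin n → Matrix (Fin w) (Fin w) (MvPolynomial (Fin n) F)}
    (hD : ∀ i r c, D i r c ∈ supported F {i}) {k : ℕ} (hk : k ≤ n) (r c : Fin w) :
    prefixProd k D r c ∈ supported F (prefixFinset n k : Set (Fin n)) := by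
  induction k generalizing c with
  | zero =>
    rw [prefixProd_zero, one_apply]
    split_ifs
    exacts [one_mem _, zero_mem _]
  | succ k ih =>
    rw [prefixProd_succ (by omega), mul_apply]
    refine Subalgebra.sum_mem _ fun j _ => Subalgebra.mul_mem _ ?_ ?_
    · refine supported_mono ?_ (ih (by omega) j)
      intro i
      simp only [Finset.mem_coe, mem_prefixFinset]
      omega
    · refine supported_mono ?_ (hD _ j c)
      simp [mem_prefixFinset]

theorem prefixProd_mulVec_eq {w K : ℕ}
    {D : Fin n → Matrix (Fin w) (Fin w) (MvPolynomial (Fin n) F)}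
    {f : ℕ → Fin w → MvPolynomial (Fin n) F}
    (hD : ∀ i : Fin n, (i : ℕ) < K → D i *ᵥ f (i + 1) = f i) {k : ℕ} (hkK : k ≤ K) (hkn : k ≤ n) :
    prefixProd k D *ᵥ f k = f 0 := by
  induction k with
  | zero => rw [prefixProd_zero, one_mulVec]
  | succ k ih =>
    rw [prefixProd_succ (by omega), ← mulVec_mulVec, hD ⟨k, by omega⟩ (show k < K by omega),
      ih (by omega) (by omega)]

namespace ROABP

variable {w : ℕ} (d : ℕ) (A : MvPolynomial (Fin n) F) (b : ℕ → Fin w → Fin n →₀ ℕ)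
  (c : ℕ → (Fin n →₀ ℕ) → Fin w → F) (i0 : Fin w)

noncomputable def coeffVec (k : ℕ) : Fin w → MvPolynomial (Fin n) F :=
  fun ℓ => coeffWrt (prefixFinset n k) (b k ℓ) A

noncomputable def layer (i : Fin n) : Matrix (Fin w) (Fin w) (MvPolynomial (Fin n) F) :=
  if (i : ℕ) + 1 < n then
    of fun r ℓ => ∑ j ∈ Finset.range (d + 1),
      monomial (Finsupp.single i j) (c (i + 1) (b i r + Finsupp.single i j) ℓ)
  else
    of fun r ℓ => if ℓ = i0 then coeffVec A b i r else 0

theorem layer_apply_mem_supported (i : Fin n) (r ℓ : Fin w) :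
    layer d A b c i0 i r ℓ ∈ supported F ({i} : Set (Fin n)) := by
  unfold layer
  split_ifs with hi
  · rw [of_apply]
    refine Subalgebra.sum_mem _ fun j _ => ?_
    rw [mem_supported_iff_support]
    intro μ hμ k hk
    rw [(Finset.mem_singleton.1 (support_monomial_subset hμ))]
    exact Finsupp.single_eq_of_ne (by simpa using hk)
  · rw [of_apply]
    split_ifs
    · refine supported_mono ?_ (coeffWrt_mem_supported _ _ _)
      intro k hk
      simp only [Set.mem_compl_iff, Finset.mem_coe, mem_prefixFinset, not_lt] at hk
      exact Fin.ext (by omega)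
    · exact zero_mem _

variable {d A b c}

theorem layer_mulVec_coeffVec (hA : IndivDegLE d A) {i : Fin n} (hi : (i : ℕ) + 1 < n)
    (hb : ∀ ℓ k, b i ℓ k ≤ d) (hbS : ∀ ℓ, ∀ k ∉ prefixFinset n i, b i ℓ k = 0)
    (hc : ∀ m : Fin n →₀ ℕ, (∀ k, m k ≤ d) →
      ∑ ℓ, c (i + 1) m ℓ • coeffVec A b (i + 1) ℓ = coeffWrt (prefixFinset n (i + 1)) m A) :
    layer d A b c i0 i *ᵥ coeffVec A b (i + 1) = coeffVec A b i := by
  have hiS : i ∉ prefixFinset n i := by simp [mem_prefixFinset]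
  funext r
  have hbound (j : ℕ) (hj : j ∈ Finset.range (d + 1)) (k : Fin n) :
      (b i r + Finsupp.single i j) k ≤ d := by
    have := Finset.mem_range.1 hj
    by_cases hk : k = i
    · subst hk
      rw [Finsupp.add_apply, hbS r k hiS, Finsupp.single_eq_same]
      omega
    · rw [Finsupp.add_apply, Finsupp.single_eq_of_ne hk, add_zero]
      exact hb r k
  calc (layer d A b c i0 i *ᵥ coeffVec A b (i + 1)) r
      = ∑ j ∈ Finset.range (d + 1), monomial (Finsupp.single i j) 1 *
          ∑ ℓ, c (i + 1) (b i r + Finsupp.single i j) ℓ • coeffVec A b (i + 1) ℓ := by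
        simp only [layer, hi, if_true, mulVec, dotProduct, of_apply, Finset.sum_mul,
          Finset.mul_sum, monomial_one_mul_smul]
        rw [Finset.sum_comm]
    _ = ∑ j ∈ Finset.range (d + 1), monomial (Finsupp.single i j) 1 *
          coeffWrt {i} (Finsupp.single i j) (coeffWrt (prefixFinset n i) (b i r) A) := by
        refine Finset.sum_congr rfl fun j hj => ?_
        rw [hc _ (hbound j hj), coeffWrt_single_coeffWrt hiS (hbS r), prefixFinset_succ]
    _ = coeffVec A b i r :=
        sum_monomial_mul_coeffWrt_single fun μ hμ => hA.coeffWrt _ _ μ hμ _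

theorem layer_mulVec_single {i : Fin n} (hi : (i : ℕ) + 1 = n) :
    layer d A b c i0 i *ᵥ Pi.single i0 1 = coeffVec A b i := by
  ext r
  simp [layer, hi, mulVec, dotProduct, Pi.single_apply]


theorem prefixProd_layer_mulVec_coeffVec (hA : IndivDegLE d A) (hb0 : b 0 = 0)
    (hbc : ∀ k, 1 ≤ k → k < n → IsCoeffBasis d (prefixFinset n k) A (b k) (c k))
    {k : ℕ} (hk : k < n) :
    prefixProd k (layer d A b c i0) *ᵥ coeffVec A b k = fun _ => A := by
  have hexp (i : ℕ) (hi : i < n) :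
      (∀ ℓ j, b i ℓ j ≤ d) ∧ ∀ ℓ, ∀ j ∉ prefixFinset n i, b i ℓ j = 0 := by
    rcases Nat.eq_zero_or_pos i with rfl | hi0
    · simp [hb0]
    · exact ⟨(hbc i hi0 hi).exp_le, (hbc i hi0 hi).exp_eq_zero⟩
  rw [prefixProd_mulVec_eq (K := n - 1) (fun i hi => layer_mulVec_coeffVec i0 hA (by omega)
    (hexp i i.2).1 (hexp i i.2).2 (hbc (i + 1) (by omega) (by omega)).sum_coord_smul)
    (by omega) hk.le]
  have h0 : prefixFinset n 0 = ∅ := by ext; simp [mem_prefixFinset]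
  funext ℓ
  rw [coeffVec, h0, coeffWrt_empty]

theorem layerProd_layer_mulVec_single (hA : IndivDegLE d A) (hb0 : b 0 = 0)
    (hbc : ∀ k, 1 ≤ k → k < n → IsCoeffBasis d (prefixFinset n k) A (b k) (c k)) (hn : 0 < n) :
    layerProd (layer d A b c i0) *ᵥ Pi.single i0 1 = fun _ => A := by
  obtain ⟨m, rfl⟩ := Nat.exists_eq_add_of_lt hn
  rw [layerProd_eq_prefixProd, prefixProd_succ (by omega), ← mulVec_mulVec,
    layer_mulVec_single i0 rfl]
  exact prefixProd_layer_mulVec_coeffVec i0 hA hb0 hbc (by omega)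

theorem coeff_single_mul_prefixProd_layer (hA : IndivDegLE d A) (hb0 : b 0 = 0)
    (hbc : ∀ k, 1 ≤ k → k < n → IsCoeffBasis d (prefixFinset n k) A (b k) (c k))
    {k : ℕ} (hk1 : 1 ≤ k) (hkn : k < n) (ℓ₀ : Fin w) :
    (fun ℓ => (((single (0 : Fin 1) i0 (1 : F)).map (C (σ := Fin n)) *
        prefixProd k (layer d A b c i0) : Matrix (Fin 1) (Fin w) (MvPolynomial (Fin n) F))
          0 ℓ).coeff (expOn (prefixFinset n k) (b k ℓ₀))) =
      fun ℓ => if ℓ = ℓ₀ then 1 else 0 := by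
  have hbasis := hbc k hk1 hkn
  simp only [map_single, map_one, single_mul_apply_same, one_mul,
    expOn_eq_self (hbasis.exp_eq_zero ℓ₀)]
  set P := prefixProd k (layer d A b c i0)
  have hP (ℓ : Fin w) : P i0 ℓ ∈ supported F (prefixFinset n k : Set (Fin n)) :=
    prefixProd_apply_mem_supported (layer_apply_mem_supported d A b c i0) hkn.le i0 ℓ
  have hA_eq : ∑ ℓ, P i0 ℓ * coeffVec A b k ℓ = A :=
    congrFun (prefixProd_layer_mulVec_coeffVec i0 hA hb0 hbc hkn) i0
  have hcoord : ∑ ℓ, (P i0 ℓ).coeff (b k ℓ₀) • coeffVec A b k ℓ =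
      ∑ ℓ, (Pi.single ℓ₀ 1 : Fin w → F) ℓ • coeffVec A b k ℓ := by
    calc ∑ ℓ, (P i0 ℓ).coeff (b k ℓ₀) • coeffVec A b k ℓ
        = coeffWrt (prefixFinset n k) (b k ℓ₀) (∑ ℓ, P i0 ℓ * coeffVec A b k ℓ) := by
          rw [coeffWrt_sum]
          exact Finset.sum_congr rfl fun ℓ _ => (coeffWrt_mul (hP ℓ)
            (coeffWrt_mem_supported _ _ _) (hbasis.exp_eq_zero ℓ₀)).symm
      _ = coeffVec A b k ℓ₀ := by rw [hA_eq]; rfl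
      _ = ∑ ℓ, (Pi.single ℓ₀ 1 : Fin w → F) ℓ • coeffVec A b k ℓ := by
          simp [Pi.single_apply, coeffVec]
  funext ℓ
  rw [Fintype.linearIndependent_iffₛ.1 hbasis.linearIndependent _ _ hcoord ℓ, Pi.single_apply]

end ROABP

end

theorem exists_roabp_with_full_rank_prefix_coefficient_space_general
    {F : Type*} [Field F] {n w d : ℕ} (hw : 0 < w)
    (A : MvPolynomial (Fin n) F)
    (hdeg : IndivDegLE d A)
    (hdim : ∀ k, 1 ≤ k → k ≤ n - 1 →
      Module.rank F ↥(Submodule.span F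
        {P : MvPolynomial (Fin n) F |
          ∃ a : Fin n → ℕ, (∀ i, a i ≤ d) ∧ P = coeffWrt (prefixFinset n k) a A}) = w) :
    ∃ (u : Matrix (Fin 1) (Fin w) F)
      (D : Fin n → Matrix (Fin w) (Fin w) (MvPolynomial (Fin n) F))
      (v : Matrix (Fin w) (Fin 1) F),
      (∀ i r c, UnivariateIn i (D i r c)) ∧
      A = (u.map (MvPolynomial.C (σ := Fin n)) * layerProd D * v.map (MvPolynomial.C (σ := Fin n)) :
        Matrix (Fin 1) (Fin 1) (MvPolynomial (Fin n) F)) 0 0 ∧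
      ∀ k, 1 ≤ k → k ≤ n - 1 →
        (∀ ℓ : Fin w, ∃ a : Fin n → ℕ, (∀ i, a i ≤ d) ∧
          (fun c : Fin w =>
            ((u.map (MvPolynomial.C) * prefixProd k D :
              Matrix (Fin 1) (Fin w) (MvPolynomial (Fin n) F)) 0 c).coeff
                (expOn (prefixFinset n k) a)) =
            fun c : Fin w => if c = ℓ then (1 : F) else 0) ∧
        Submodule.span F
          {vec : Fin w → F | ∃ a : Fin n → ℕ, (∀ i, a i ≤ d) ∧
            vec = fun c : Fin w =>
              ((u.map (MvPolynomial.C) * prefixProd k D :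
                Matrix (Fin 1) (Fin w) (MvPolynomial (Fin n) F)) 0 c).coeff
                  (expOn (prefixFinset n k) a)} = ⊤ := by
  set i0 : Fin w := ⟨0, hw⟩
  rcases Nat.eq_zero_or_pos n with rfl | hn
  · refine ⟨single 0 i0 (coeff 0 A), Fin.elim0, single i0 0 1, fun i => i.elim0, ?_,
      fun k hk1 hk2 => by omega⟩
    simp [layerProd, map_single, ← eq_C_of_isEmpty]
  have hbasis (k : ℕ) : ∃ (b : Fin w → Fin n →₀ ℕ) (c : (Fin n →₀ ℕ) → Fin w → F),
      (k = 0 → b = 0) ∧ (1 ≤ k → k < n → IsCoeffBasis d (prefixFinset n k) A b c) := by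
    by_cases hk : 1 ≤ k ∧ k < n
    · obtain ⟨b, c, h⟩ := exists_isCoeffBasis (hdim k hk.1 (by omega))
      exact ⟨b, c, by omega, fun _ _ => h⟩
    · exact ⟨0, 0, fun _ => rfl, fun h1 h2 => absurd ⟨h1, h2⟩ hk⟩
  choose b c hb0 hbc using hbasis
  have hunit (k : ℕ) (hk1 : 1 ≤ k) (hkn : k ≤ n - 1) (ℓ : Fin w) :=
    ROABP.coeff_single_mul_prefixProd_layer i0 hdeg (hb0 0 rfl) hbc hk1 (by omega) ℓ
  refine ⟨single 0 i0 1, ROABP.layer d A b c i0, single i0 0 1, fun i r ℓ =>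
    univariateIn_iff_mem_supported.2 (ROABP.layer_apply_mem_supported d A b c i0 i r ℓ), ?_,
    fun k hk1 hkn => ⟨fun ℓ => ⟨b k ℓ, (hbc k hk1 (by omega)).exp_le ℓ, hunit k hk1 hkn ℓ⟩,
      Submodule.span_eq_top_of_forall_single_mem fun ℓ =>
        ⟨b k ℓ, (hbc k hk1 (by omega)).exp_le ℓ, (hunit k hk1 hkn ℓ).symm⟩⟩⟩
  have hA := congrFun (ROABP.layerProd_layer_mulVec_single i0 hdeg (hb0 0 rfl) hbc hn) i0
  simpa [map_single, mulVec_single_one] using hA.symm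

/-- Corollary 2.6 of the paper, full rank coefficient space: if the prefix
coefficient spaces of `A` have dimension exactly `w` for `1 ≤ k ≤ n-1` (and dimension `1` for
`k = n`), then the matrices `D₁, …, Dₙ` of an ROABP for `A` can be chosen such that for every
`k` and every `ℓ`, some coefficient of the partial product `P_k = D₁ ⋯ D_k` equals the `ℓ`-th
standard unit vector `e_ℓ`; in particular the coefficients of `P_k` span all of `F^{1×w}`. -/
theorem exists_roabp_with_full_rank_prefix_coefficient_space
    {F : Type*} [Field F] {n w d : ℕ} (hw : 0 < w)
    (A : MvPolynomial (Fin n) F)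
    (hdeg : IndivDegLE d A)
    (hdim : ∀ k, 1 ≤ k → k ≤ n - 1 →
      Module.rank F ↥(Submodule.span F
        {P : MvPolynomial (Fin n) F |
          ∃ a : Fin n → ℕ, (∀ i, a i ≤ d) ∧ P = coeffWrt (prefixFinset n k) a A}) = w)
    (hdimn : Module.rank F ↥(Submodule.span F
        {P : MvPolynomial (Fin n) F |
          ∃ a : Fin n → ℕ, (∀ i, a i ≤ d) ∧ P = coeffWrt (prefixFinset n n) a A}) = 1) :
    ∃ (u : Matrix (Fin 1) (Fin w) F)
      (D : Fin n → Matrix (Fin w) (Fin w) (MvPolynomial (Fin n) F))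
      (v : Matrix (Fin w) (Fin 1) F),
      (∀ i r c, UnivariateIn i (D i r c)) ∧
      A = (u.map (MvPolynomial.C (σ := Fin n)) * layerProd D * v.map (MvPolynomial.C (σ := Fin n)) :
        Matrix (Fin 1) (Fin 1) (MvPolynomial (Fin n) F)) 0 0 ∧
      ∀ k, 1 ≤ k → k ≤ n - 1 →
        (∀ ℓ : Fin w, ∃ a : Fin n → ℕ, (∀ i, a i ≤ d) ∧
          (fun c : Fin w =>
            ((u.map (MvPolynomial.C) * prefixProd k D :
              Matrix (Fin 1) (Fin w) (MvPolynomial (Fin n) F)) 0 c).coeff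
                (expOn (prefixFinset n k) a)) =
            fun c : Fin w => if c = ℓ then (1 : F) else 0) ∧
        Submodule.span F
          {vec : Fin w → F | ∃ a : Fin n → ℕ, (∀ i, a i ≤ d) ∧
            vec = fun c : Fin w =>
              ((u.map (MvPolynomial.C) * prefixProd k D :
                Matrix (Fin 1) (Fin w) (MvPolynomial (Fin n) F)) 0 c).coeff
                  (expOn (prefixFinset n k) a)} = ⊤ :=
  exists_roabp_with_full_rank_prefix_coefficient_space_general hw A hdeg hdim
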